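/- arXiv:2409.01507 — 4 statements merged into one kernel-verified Lean document; each statement's English description precedes it below -/
import Mathlib

section
/- Vanishing rate of F₋: there exists a universal constant c > 0 such that for every fixed x ∈ (0,2π) the function y ↦ F₋(x,y) on [0,2π] has exactly two zeros y' < y'' which satisfy 0 < y' < 2π−x < y'' < 2π; F₋(x,y) < 0 if and only if y ∈ (y', y''); and moreover F₋(x,y) ≥ c·(y'−y)·sin(x/2) for all y ∈ [0, y') and F₋(x,y) ≥ c·(y−y'')·sin(x/2) for all y ∈ (y'', 2π]. -/
open MeasureTheory Real Set

noncomputable section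

/-- The dispersion relation `ω(p) = |sin(p/2)|`. -/
def ω (p : ℝ) : ℝ := |Real.sin (p / 2)|

/-- Parameterization `h(x,z)` of the resonant manifold. -/
def resH (x z : ℝ) : ℝ :=
  (z - x) / 2 + 2 * Real.arcsin (Real.tan (|z - x| / 4) * Real.cos ((x + z) / 4))

/-- `F₊(x,z) = (cos(x/2)+cos(z/2))² + 4 sin(x/2) sin(z/2)`. -/
def Fplus (x z : ℝ) : ℝ :=
  (Real.cos (x / 2) + Real.cos (z / 2)) ^ 2 + 4 * Real.sin (x / 2) * Real.sin (z / 2)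

/-- `F₋(x,z) = (cos(x/2)+cos(z/2))² − 4 sin(x/2) sin(z/2)`. -/
def Fminus (x z : ℝ) : ℝ :=
  (Real.cos (x / 2) + Real.cos (z / 2)) ^ 2 - 4 * Real.sin (x / 2) * Real.sin (z / 2)

/-!
On `[0, 2π - x]`, wherever `F₋(x, ·)` is nonnegative its `y`-derivative is at most
`-2 sin (x/2)`. As `F₋(x, 0) > 0 > F₋(x, 2π - x)`, a fencing argument gives a unique zero `y'`
there, `F₋(x, y) ≥ sin (x/2) (y' - y)` to its left and `F₋ < 0` to its right. The symmetry
`F₋(2π - x, 2π - y) = F₋(x, y)` transfers this to `[2π - x, 2π]`, so `c = 1` works.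
-/

section
variable {g g' : ℝ → ℝ} {p q ε : ℝ}

theorem add_mul_sub_le_of_deriv_lt_neg (hg : ∀ y ∈ Icc p q, HasDerivAt g (g' y) y)
    (hε : 0 ≤ ε) (hg' : ∀ y ∈ Icc p q, 0 ≤ g y → g' y < -ε) (hq : 0 ≤ g q)
    {y : ℝ} (hy : y ∈ Icc p q) : g q + ε * (q - y) ≤ g y := by
  have hmem : ∀ u ∈ Icc (-q) (-p), -u ∈ Icc p q := fun u hu =>
    ⟨by linarith [hu.2], by linarith [hu.1]⟩
  have hrefl : ∀ u ∈ Icc (-q) (-p), HasDerivAt (fun u => -g (-u)) (g' (-u)) u := fun u hu => by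
    simpa using ((hg (-u) (hmem u hu)).comp u (hasDerivAt_neg' u)).fun_neg
  have hB (u : ℝ) : HasDerivAt (fun u => -g q - ε * (u + q)) (-ε) u := by
    simpa using (((hasDerivAt_id u).add_const q).const_mul ε).const_sub (-g q)
  -- fencing only runs forward, so run it from `-q` for the reflection `u ↦ -g (-u)`
  have := image_le_of_deriv_right_lt_deriv_boundary' (a := -q) (b := -p)
    (fun u hu => (hrefl u hu).continuousAt.continuousWithinAt)
    (fun u hu => (hrefl u (Ico_subset_Icc_self hu)).hasDerivWithinAt) (by simp)
    (by fun_prop) (fun u _ => (hB u).hasDerivWithinAt)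
    (fun u hu hcontact => hg' (-u) (hmem u (Ico_subset_Icc_self hu)) (by nlinarith [hu.1]))
    (x := -y) ⟨by linarith [hy.2], by linarith [hy.1]⟩
  simp only [neg_neg] at this
  linarith

theorem neg_of_deriv_lt_neg_of_nonpos (hg : ∀ y ∈ Icc p q, HasDerivAt g (g' y) y)
    (hε : 0 < ε) (hg' : ∀ y ∈ Icc p q, 0 ≤ g y → g' y < -ε) {t : ℝ} (ht : t ∈ Icc p q)
    (hgt : g t ≤ 0) {y : ℝ} (hy : y ∈ Ioc t q) : g y < 0 := by
  have hsub : Icc t q ⊆ Icc p q := Icc_subset_Icc_left ht.1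
  have hle : g y ≤ 0 := image_le_of_deriv_right_lt_deriv_boundary' (f := g) (B := fun _ => 0)
    (fun u hu => (hg u (hsub hu)).continuousAt.continuousWithinAt)
    (fun u hu => (hg u (hsub (Ico_subset_Icc_self hu))).hasDerivWithinAt) hgt continuousOn_const
    (fun u _ => hasDerivWithinAt_const u _ 0)
    (fun u hu hgu => (hg' u (hsub (Ico_subset_Icc_self hu)) hgu.ge).trans (by linarith))
    (Ioc_subset_Icc_self hy)
  -- a zero at `y` would force `g t ≥ ε (y - t) > 0`
  refine hle.lt_of_ne fun hgy => ?_
  have := add_mul_sub_le_of_deriv_lt_neg (p := t) (q := y)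
    (fun u hu => hg u (hsub ⟨hu.1, hu.2.trans hy.2⟩)) hε.le
    (fun u hu => hg' u (hsub ⟨hu.1, hu.2.trans hy.2⟩)) hgy.ge ⟨le_rfl, hy.1.le⟩
  nlinarith [hy.1]

theorem exists_zero_of_deriv_lt_neg (hg : ∀ y ∈ Icc p q, HasDerivAt g (g' y) y)
    (hpq : p ≤ q) (hε : 0 < ε) (hg' : ∀ y ∈ Icc p q, 0 ≤ g y → g' y < -ε)
    (hp : 0 < g p) (hq : g q < 0) :
    ∃ r ∈ Ioo p q, g r = 0 ∧ (∀ y ∈ Icc p r, ε * (r - y) ≤ g y) ∧ ∀ y ∈ Ioc r q, g y < 0 := by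
  obtain ⟨r, hr, hgr⟩ : 0 ∈ g '' Icc p q :=
    intermediate_value_Icc' hpq (fun u hu => (hg u hu).continuousAt.continuousWithinAt)
      ⟨hq.le, hp.le⟩
  have hsub : Icc p r ⊆ Icc p q := Icc_subset_Icc_right hr.2
  refine ⟨r, ⟨hr.1.lt_of_ne ?_, hr.2.lt_of_ne ?_⟩, hgr, fun y hy => ?_, fun y hy => ?_⟩
  · rintro rfl; exact hp.ne' hgr
  · rintro rfl; exact hq.ne hgr
  · simpa [hgr] using add_mul_sub_le_of_deriv_lt_neg (fun u hu => hg u (hsub hu)) hε.le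
      (fun u hu => hg' u (hsub hu)) hgr.ge hy
  · exact neg_of_deriv_lt_neg_of_nonpos hg hε hg' hr hgr.le hy

end

def FminusDeriv (x y : ℝ) : ℝ :=
  -((cos (x / 2) + cos (y / 2)) * sin (y / 2)) - 2 * sin (x / 2) * cos (y / 2)

theorem hasDerivAt_Fminus (x y : ℝ) : HasDerivAt (Fminus x) (FminusDeriv x y) y := by
  have hhalf : HasDerivAt (fun z : ℝ => z / 2) (1 / 2) y := (hasDerivAt_id y).div_const 2
  refine (((hhalf.cos.const_add (cos (x / 2))).fun_pow 2).fun_sub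
    (hhalf.sin.const_mul (4 * sin (x / 2)))).congr_deriv ?_
  simp only [FminusDeriv]
  ring

theorem Fminus_two_pi_sub (x y : ℝ) : Fminus (2 * π - x) (2 * π - y) = Fminus x y := by
  have hhalf (t : ℝ) : (2 * π - t) / 2 = π - t / 2 := by ring
  simp only [Fminus, hhalf, cos_pi_sub, sin_pi_sub]
  ring

theorem FminusDeriv_le_of_Fminus_nonneg {x y : ℝ} (hx : 0 < x) (hy : 0 ≤ y)
    (hxy : y ≤ 2 * π - x) (hF : 0 ≤ Fminus x y) : FminusDeriv x y ≤ -2 * sin (x / 2) := by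
  have hc1 : cos (x / 2) < 1 := by
    simpa using cos_lt_cos_of_nonneg_of_le_pi le_rfl (by linarith [pi_pos]) (half_pos hx)
  have hs2 : 0 ≤ sin (y / 2) := sin_nonneg_of_nonneg_of_le_pi (by linarith) (by linarith)
  have hsum : 0 ≤ cos (x / 2) + cos (y / 2) := by
    have := cos_le_cos_of_nonneg_of_le_pi (by linarith) (by linarith)
      (by linarith : y / 2 ≤ π - x / 2)
    rw [cos_pi_sub] at this
    linarith
  have hF' : 4 * sin (x / 2) * sin (y / 2) ≤ (cos (x / 2) + cos (y / 2)) ^ 2 := by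
    unfold Fminus at hF; linarith
  have hc2 : 0 < 1 + cos (y / 2) := by linarith
  have hbracket : 0 ≤ (cos (x / 2) + cos (y / 2)) * (1 + cos (y / 2))
      - 2 * sin (x / 2) * sin (y / 2) := by
    nlinarith [mul_nonneg hsum (by linarith [neg_one_le_cos (y / 2)] :
      0 ≤ 2 + cos (y / 2) - cos (x / 2))]
  -- `(1 - cos (y/2)) (1 + cos (y/2)) = sin (y/2) ^ 2` lets `sin (y/2)` factor out
  have hprod : (FminusDeriv x y + 2 * sin (x / 2)) * (1 + cos (y / 2)) = -(sin (y / 2) *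
      ((cos (x / 2) + cos (y / 2)) * (1 + cos (y / 2)) - 2 * sin (x / 2) * sin (y / 2))) := by
    unfold FminusDeriv
    linear_combination (-2 * sin (x / 2)) * sin_sq_add_cos_sq (y / 2)
  have : (FminusDeriv x y + 2 * sin (x / 2)) * (1 + cos (y / 2)) ≤ 0 := by
    rw [hprod]; exact neg_nonpos.mpr (mul_nonneg hs2 hbracket)
  nlinarith

theorem Fminus_left_half {x : ℝ} (hx0 : 0 < x) (hx : x < 2 * π) :
    ∃ y' ∈ Ioo 0 (2 * π - x), Fminus x y' = 0 ∧
      (∀ y ∈ Icc 0 y', sin (x / 2) * (y' - y) ≤ Fminus x y) ∧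
      ∀ y ∈ Ioc y' (2 * π - x), Fminus x y < 0 := by
  have hs : 0 < sin (x / 2) := sin_pos_of_pos_of_lt_pi (by linarith) (by linarith)
  have hc : -1 < cos (x / 2) := by
    simpa using cos_lt_cos_of_nonneg_of_le_pi (by linarith) le_rfl (by linarith : x / 2 < π)
  have hF0 : 0 < Fminus x 0 := by
    simp only [Fminus, zero_div, cos_zero, sin_zero, mul_zero, sub_zero]
    nlinarith
  have hFmid : Fminus x (2 * π - x) < 0 := by
    rw [Fminus, show (2 * π - x) / 2 = π - x / 2 by ring, cos_pi_sub, sin_pi_sub]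
    nlinarith
  exact exists_zero_of_deriv_lt_neg (fun y _ => hasDerivAt_Fminus x y) (by linarith) hs
    (fun y hy hF => (FminusDeriv_le_of_Fminus_nonneg hx0 hy.1 hy.2 hF).trans_lt (by linarith))
    hF0 hFmid

theorem Fminus_sign_pattern {x : ℝ} (hx0 : 0 < x) (hx : x < 2 * π) :
    ∃ y' y'', 0 < y' ∧ y' < 2 * π - x ∧ 2 * π - x < y'' ∧ y'' < 2 * π ∧
      Fminus x y' = 0 ∧ Fminus x y'' = 0 ∧
      (∀ y ∈ Icc 0 y', sin (x / 2) * (y' - y) ≤ Fminus x y) ∧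
      (∀ y ∈ Ioo y' y'', Fminus x y < 0) ∧
      ∀ y ∈ Icc y'' (2 * π), sin (x / 2) * (y - y'') ≤ Fminus x y := by
  obtain ⟨y', hy', hFy', hleft, hneg⟩ := Fminus_left_half hx0 hx
  obtain ⟨z, hz, hFz, hleft', hneg'⟩ :=
    Fminus_left_half (x := 2 * π - x) (by linarith) (by linarith)
  have hreflect (y : ℝ) : Fminus x y = Fminus (2 * π - x) (2 * π - y) := by
    rw [Fminus_two_pi_sub]
  have hsin : sin ((2 * π - x) / 2) = sin (x / 2) := by
    rw [show (2 * π - x) / 2 = π - x / 2 by ring, sin_pi_sub]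
  refine ⟨y', 2 * π - z, hy'.1, hy'.2, by linarith [hz.2], by linarith [hz.1], hFy',
    by rw [hreflect, sub_sub_cancel, hFz], hleft, fun y hy => ?_, fun y hy => ?_⟩
  · rcases le_or_gt y (2 * π - x) with hyx | hyx
    · exact hneg y ⟨hy.1, hyx⟩
    · rw [hreflect]
      exact hneg' _ ⟨by linarith [hy.2], by linarith⟩
  · have := hleft' (2 * π - y) ⟨by linarith [hy.2], by linarith [hy.1]⟩
    rw [hsin] at this
    rw [hreflect]
    linarith

/-- **Vanishing rate of `F₋`:** there is a universal constant `c > 0` such that for each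
`x ∈ (0,2π)` the function `y ↦ F₋(x,y)` on `[0,2π]` has exactly two zeros
`y' < y''`, with `0 < y' < 2π−x < y'' < 2π`; it is negative exactly on `(y',y'')`, and
`F₋(x,y) ≥ c (y'−y) sin(x/2)` on `[0,y')` and `F₋(x,y) ≥ c (y−y'') sin(x/2)` on `(y'',2π]`. -/
theorem stmt4 :
    ∃ c : ℝ, 0 < c ∧ ∀ x ∈ Set.Ioo (0:ℝ) (2 * π),
      ∃ y' y'' : ℝ,
        0 < y' ∧ y' < 2 * π - x ∧ 2 * π - x < y'' ∧ y'' < 2 * π ∧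
        Fminus x y' = 0 ∧ Fminus x y'' = 0 ∧
        (∀ y ∈ Set.Icc (0:ℝ) (2 * π), Fminus x y = 0 → y = y' ∨ y = y'') ∧
        (∀ y ∈ Set.Icc (0:ℝ) (2 * π), (Fminus x y < 0 ↔ y ∈ Set.Ioo y' y'')) ∧
        (∀ y ∈ Set.Ico (0:ℝ) y', c * (y' - y) * Real.sin (x / 2) ≤ Fminus x y) ∧
        (∀ y ∈ Set.Ioc y'' (2 * π), c * (y - y'') * Real.sin (x / 2) ≤ Fminus x y) := by
  refine ⟨1, one_pos, fun x hx => ?_⟩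
  obtain ⟨y', y'', h0y', hy'x, hxy'', hy''2π, hFy', hFy'', hleft, hmid, hright⟩ :=
    Fminus_sign_pattern hx.1 hx.2
  have hs : 0 < sin (x / 2) := sin_pos_of_pos_of_lt_pi (by linarith [hx.1]) (by linarith [hx.2])
  have hcases : ∀ y ∈ Icc 0 (2 * π),
      0 < Fminus x y ∨ y = y' ∨ y ∈ Ioo y' y'' ∨ y = y'' := by
    intro y hy
    rcases lt_trichotomy y y' with hyy' | rfl | hyy'
    · exact .inl ((mul_pos hs (sub_pos.mpr hyy')).trans_le (hleft y ⟨hy.1, hyy'.le⟩))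
    · exact .inr (.inl rfl)
    rcases lt_trichotomy y y'' with hyy'' | rfl | hyy''
    · exact .inr (.inr (.inl ⟨hyy', hyy''⟩))
    · exact .inr (.inr (.inr rfl))
    · exact .inl ((mul_pos hs (sub_pos.mpr hyy'')).trans_le (hright y ⟨hyy''.le, hy.2⟩))
  refine ⟨y', y'', h0y', hy'x, hxy'', hy''2π, hFy', hFy'', fun y hy hFy => ?_,
    fun y hy => ⟨fun hFy => ?_, hmid y⟩,
    fun y hy => by simpa [mul_comm] using hleft y (Ico_subset_Icc_self hy),
    fun y hy => by simpa [mul_comm] using hright y (Ioc_subset_Icc_self hy)⟩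
  · rcases hcases y hy with hpos | rfl | hmem | rfl
    · exact absurd hFy hpos.ne'
    · exact .inl rfl
    · exact absurd hFy (hmid y hmem).ne
    · exact .inr rfl
  · rcases hcases y hy with hpos | rfl | hmem | rfl
    · exact absurd hFy hpos.not_gt
    · exact absurd hFy hFy'.not_lt
    · exact hmem
    · exact absurd hFy hFy''.not_lt
end
end

section
/- For all x,z ∈ [0,2π] with (x,z) ∉ {(0,2π),(2π,0)}, one has the identity |sin(h̲(x,z)/2) · sin(h(x,z)/2)| = tan²((z−x)/4) · sin(x/2) · sin(z/2). -/
open MeasureTheory Real Set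

noncomputable section

/-- `h̲(x,z) = x − z + h(x,z)`. -/
def resHu (x z : ℝ) : ℝ := x - z + resH x z

/-!
With `a = (z - x)/4`, `s = (x + z)/4` and `θ = arcsin (tan |a| · cos s)` one has
`h/2 = θ + a`, `h̲/2 = θ - a`, `x/2 = s - a`, `z/2 = s + a`. By `sin (u - v) sin (u + v) = sin² u - sin² v`
the left-hand side is `|sin² θ - sin² a| = |tan² a · cos² s - tan² a · cos² a|`, which is
`tan² a · (sin² s - sin² a) = tan² a · sin (s - a) sin (s + a)`. The excluded corners are exactly
where `|a| = π/2`; elsewhere `|a| ≤ s ≤ π - |a|` gives `|cos s| ≤ cos a`, so the argument of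
`arcsin` lies in `[-1, 1]`.
-/

namespace Real

theorem sin_sub_mul_sin_add (u v : ℝ) : sin (u - v) * sin (u + v) = sin u ^ 2 - sin v ^ 2 := by
  rw [sin_sub, sin_add]
  linear_combination sin u ^ 2 * sin_sq_add_cos_sq v - sin v ^ 2 * sin_sq_add_cos_sq u

theorem sin_sub_mul_sin_add_of_sin_sq_eq {θ a s : ℝ} (hθ : sin θ ^ 2 = tan a ^ 2 * cos s ^ 2)
    (ha : cos a ≠ 0) :
    sin (θ - a) * sin (θ + a) = -(tan a ^ 2 * (sin (s - a) * sin (s + a))) := by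
  have htan : tan a ^ 2 * cos a ^ 2 = sin a ^ 2 := by rw [← mul_pow, tan_mul_cos ha]
  rw [sin_sub_mul_sin_add, sin_sub_mul_sin_add, hθ]
  linear_combination tan a ^ 2 * sin_sq_add_cos_sq s - tan a ^ 2 * sin_sq_add_cos_sq a + htan

theorem abs_sin_sub_mul_sin_add_of_sin_sq_eq {θ a s : ℝ} (hθ : sin θ ^ 2 = tan a ^ 2 * cos s ^ 2)
    (ha : cos a ≠ 0) (hs : 0 ≤ sin (s - a) * sin (s + a)) :
    |sin (θ - a) * sin (θ + a)| = tan a ^ 2 * (sin (s - a) * sin (s + a)) := by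
  rw [sin_sub_mul_sin_add_of_sin_sq_eq hθ ha, abs_neg, abs_of_nonneg (by positivity)]

theorem abs_cos_le_cos_of_abs_le {a s : ℝ} (h₁ : |a| ≤ s) (h₂ : s ≤ π - |a|) :
    |cos s| ≤ cos a := by
  have ha := abs_nonneg a
  rw [← cos_abs a, abs_le]
  constructor
  · have := cos_le_cos_of_nonneg_of_le_pi ha (by linarith) (show |a| ≤ π - s by linarith)
    rw [cos_pi_sub] at this
    linarith
  · exact cos_le_cos_of_nonneg_of_le_pi ha (by linarith) h₁

theorem abs_tan_mul_cos_le_one {a s : ℝ} (h : |cos s| ≤ cos a) : |tan a * cos s| ≤ 1 := by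
  rcases (abs_nonneg _ |>.trans h).eq_or_lt with ha | ha
  · simp [tan_eq_sin_div_cos, ← ha]
  calc |tan a * cos s| = |sin a| / cos a * |cos s| := by
        rw [abs_mul, tan_eq_sin_div_cos, abs_div, abs_of_pos ha]
    _ ≤ |sin a| / cos a * cos a := by gcongr
    _ = |sin a| := div_mul_cancel₀ _ ha.ne'
    _ ≤ 1 := abs_sin_le_one a

end Real

/-- **Product identity:** for `x,z ∈ [0,2π]` with `(x,z) ∉ {(0,2π),(2π,0)}`,
`|sin(h̲(x,z)/2) · sin(h(x,z)/2)| = tan²((z−x)/4) · sin(x/2) · sin(z/2)`. -/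
theorem stmt5 :
    ∀ x z : ℝ, x ∈ Set.Icc 0 (2 * π) → z ∈ Set.Icc 0 (2 * π) →
      (x, z) ≠ ((0:ℝ), 2 * π) → (x, z) ≠ (2 * π, (0:ℝ)) →
      |Real.sin (resHu x z / 2) * Real.sin (resH x z / 2)| =
        Real.tan ((z - x) / 4) ^ 2 * Real.sin (x / 2) * Real.sin (z / 2) := by
  rintro x z ⟨hx₀, hx₂⟩ ⟨hz₀, hz₂⟩ hne₁ hne₂
  set a := (z - x) / 4 with ha_def
  set s := (x + z) / 4 with hs_def
  have habs : |z - x| / 4 = |a| := by rw [ha_def, abs_div, abs_of_pos (by norm_num : (0:ℝ) < 4)]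
  set θ := arcsin (tan |a| * cos s) with hθ_def
  have hzx : |z - x| < 2 * π := by
    refine abs_lt.mpr ⟨lt_of_le_of_ne (by linarith) fun h => hne₂ ?_,
      lt_of_le_of_ne (by linarith) fun h => hne₁ ?_⟩ <;> ext <;> simp only <;> linarith
  have ha : |a| < π / 2 := by linarith
  have hcos : |cos s| ≤ cos |a| :=
    abs_cos_le_cos_of_abs_le (by rw [abs_abs, abs_le]; constructor <;> linarith)
      (by rw [abs_abs]; cases abs_cases a <;> linarith)
  have hθ : sin θ = tan |a| * cos s := sin_arcsin' (abs_le.mp (abs_tan_mul_cos_le_one hcos))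
  have hθ_sq : sin θ ^ 2 = tan a ^ 2 * cos s ^ 2 := by
    rw [hθ, mul_pow]
    rcases abs_choice a with h | h <;> rw [h]
    rw [tan_neg, neg_sq]
  have hresHu : resHu x z / 2 = θ - a := by rw [resHu, resH, habs, ← hθ_def]; ring
  have hresH : resH x z / 2 = θ + a := by rw [resH, habs, ← hθ_def]; ring
  rw [hresHu, hresH, mul_assoc, show x / 2 = s - a by ring, show z / 2 = s + a by ring]
  refine abs_sin_sub_mul_sin_add_of_sin_sq_eq hθ_sq
    (cos_pos_of_mem_Ioo ⟨by linarith [neg_abs_le a], by linarith [le_abs_self a]⟩).ne' ?_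
  exact mul_nonneg (sin_nonneg_of_nonneg_of_le_pi (by linarith) (by linarith))
    (sin_nonneg_of_nonneg_of_le_pi (by linarith) (by linarith))
end
end

section
/- There exists a universal constant C > 0 such that for all x,z ∈ [0,2π] with (x,z) ∉ {(0,2π),(2π,0)}, one has ω(z) · ω(h(x,z)) · ω(h̲(x,z)) ≤ C · ω(x). -/
open MeasureTheory Real Set

noncomputable section

/-- **Product bound:** there is a universal constant `C > 0` such that for all
`x,z ∈ [0,2π]` with `(x,z) ∉ {(0,2π),(2π,0)}`,
`ω(z) · ω(h(x,z)) · ω(h̲(x,z)) ≤ C · ω(x)`. -/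
theorem stmt6 :
    ∃ C : ℝ, 0 < C ∧ ∀ x z : ℝ, x ∈ Set.Icc 0 (2 * π) → z ∈ Set.Icc 0 (2 * π) →
      (x, z) ≠ ((0:ℝ), 2 * π) → (x, z) ≠ (2 * π, (0:ℝ)) →
      ω z * ω (resH x z) * ω (resHu x z) ≤ C * ω x := by
  refine ⟨4, by norm_num, ?_⟩
  intro x z hx hz hne1 hne2
  obtain ⟨hx0, hx2⟩ := hx
  obtain ⟨hz0, hz2⟩ := hz
  have hπ := Real.pi_pos
  have hlt1 : z - x < 2 * π := by
    rcases lt_or_eq_of_le (by linarith : z - x ≤ 2 * π) with h | h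
    · exact h
    · exfalso; apply hne1
      have hx' : x = 0 := le_antisymm (by linarith) hx0
      have hz' : z = 2 * π := by linarith
      simp [hx', hz']
  have hlt2 : x - z < 2 * π := by
    rcases lt_or_eq_of_le (by linarith : x - z ≤ 2 * π) with h | h
    · exact h
    · exfalso; apply hne2
      have hz' : z = 0 := le_antisymm (by linarith) hz0
      have hx' : x = 2 * π := by linarith
      simp [hx', hz']
  set u := (z - x) / 4 with hu
  set v := (x + z) / 4 with hv
  have hcu : 0 < Real.cos u := by
    apply Real.cos_pos_of_mem_Ioo
    constructor
    · rw [hu]; linarith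
    · rw [hu]; linarith
  have habs : |z - x| / 4 = |u| := by rw [hu, abs_div]; norm_num
  have hsinabs : Real.sin |u| = |Real.sin u| := by
    rcases abs_cases u with ⟨h1, h2⟩ | ⟨h1, h2⟩
    · rw [h1, abs_of_nonneg]
      exact Real.sin_nonneg_of_nonneg_of_le_pi h2 (by rw [hu]; linarith)
    · rw [h1, Real.sin_neg, abs_of_nonpos]
      have : 0 ≤ Real.sin (-u) :=
        Real.sin_nonneg_of_nonneg_of_le_pi (by linarith) (by rw [hu]; linarith)
      rw [Real.sin_neg] at this; linarith
  have hcosabs : Real.cos |u| = Real.cos u := Real.cos_abs u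
  -- sin(x/2), sin(z/2) ≥ 0
  have hsx : 0 ≤ Real.sin (x / 2) :=
    Real.sin_nonneg_of_nonneg_of_le_pi (by linarith) (by linarith)
  have hsz : 0 ≤ Real.sin (z / 2) :=
    Real.sin_nonneg_of_nonneg_of_le_pi (by linarith) (by linarith)
  -- key bound: |sin u| * sin (z/2) ≤ 2 * cos u
  have hs4 : 0 ≤ Real.sin (z / 4) :=
    Real.sin_nonneg_of_nonneg_of_le_pi (by linarith) (by linarith)
  have hc4 : 0 ≤ Real.cos (z / 4) :=
    Real.cos_nonneg_of_mem_Icc ⟨by linarith, by linarith⟩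
  have hz24 : Real.sin (z / 2) = 2 * Real.sin (z / 4) * Real.cos (z / 4) := by
    rw [show z / 2 = 2 * (z / 4) by ring, Real.sin_two_mul]
  have hsin_le : ∀ t : ℝ, |Real.sin t| ≤ 1 := fun t => Real.abs_sin_le_one t
  have hK : |Real.sin u| * Real.sin (z / 2) ≤ 2 * Real.cos u := by
    rcases le_total x z with hxz | hxz
    · -- u ≥ 0, u ≤ z/4 ≤ π/2 ; cos u ≥ cos (z/4)
      have hu0 : 0 ≤ u := by rw [hu]; linarith
      have huz : u ≤ z / 4 := by rw [hu]; linarith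
      have hcc : Real.cos (z / 4) ≤ Real.cos u :=
        Real.cos_le_cos_of_nonneg_of_le_pi hu0 (by linarith) huz
      have h1 : Real.sin (z / 2) ≤ 2 * Real.cos u := by
        rw [hz24]; nlinarith [Real.sin_le_one (z / 4)]
      calc |Real.sin u| * Real.sin (z / 2) ≤ 1 * Real.sin (z / 2) :=
            mul_le_mul_of_nonneg_right (hsin_le u) hsz
        _ ≤ 2 * Real.cos u := by linarith
    · -- u ≤ 0, |u| = (x−z)/4 ≤ π/2 − z/4 ; cos u ≥ sin (z/4)
      have hu0 : u ≤ 0 := by rw [hu]; linarith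
      have habs' : |u| = -u := abs_of_nonpos hu0
      have huz : |u| ≤ π / 2 - z / 4 := by rw [habs', hu]; linarith
      have hcc : Real.cos (π / 2 - z / 4) ≤ Real.cos |u| :=
        Real.cos_le_cos_of_nonneg_of_le_pi (abs_nonneg u) (by linarith) huz
      rw [Real.cos_pi_div_two_sub, hcosabs] at hcc
      have h1 : Real.sin (z / 2) ≤ 2 * Real.cos u := by
        rw [hz24]; nlinarith [Real.cos_le_one (z / 4)]
      calc |Real.sin u| * Real.sin (z / 2) ≤ 1 * Real.sin (z / 2) :=
            mul_le_mul_of_nonneg_right (hsin_le u) hsz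
        _ ≤ 2 * Real.cos u := by linarith
  -- the arcsin argument
  set s := Real.tan (|z - x| / 4) * Real.cos v with hs
  have hscos : s * Real.cos u = |Real.sin u| * Real.cos v := by
    rw [hs, habs, Real.tan_eq_sin_div_cos, hsinabs, hcosabs]
    field_simp
  -- bound |sin u| * |cos v| ≤ cos u
  have huv1 : |u| ≤ v := by
    rw [abs_le]; constructor <;> (simp only [hu, hv]; try constructor) <;> linarith
  have huv2 : |u| ≤ π - v := by
    rw [abs_le]; constructor <;> (simp only [hu, hv]; try constructor) <;> linarith
  have hvcv : |Real.sin u| * |Real.cos v| ≤ Real.cos u := by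
    rcases le_total v (π / 2) with hv2 | hv2
    · have hcv : 0 ≤ Real.cos v := Real.cos_nonneg_of_mem_Icc ⟨by linarith, hv2⟩
      have hcc : Real.cos v ≤ Real.cos |u| :=
        Real.cos_le_cos_of_nonneg_of_le_pi (abs_nonneg u) (by linarith) huv1
      rw [hcosabs] at hcc
      rw [abs_of_nonneg hcv]
      calc |Real.sin u| * Real.cos v ≤ 1 * Real.cos v :=
            mul_le_mul_of_nonneg_right (hsin_le u) hcv
        _ ≤ Real.cos u := by linarith
    · have hcv : Real.cos v ≤ 0 := by
        have := Real.cos_nonpos_of_pi_div_two_le_of_le hv2 (by simp only [hv]; linarith)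
        exact this
      have hcc : Real.cos (π - v) ≤ Real.cos |u| :=
        Real.cos_le_cos_of_nonneg_of_le_pi (abs_nonneg u) (by linarith) huv2
      rw [hcosabs, Real.cos_pi_sub] at hcc
      rw [abs_of_nonpos hcv]
      calc |Real.sin u| * -Real.cos v ≤ 1 * -Real.cos v :=
            mul_le_mul_of_nonneg_right (hsin_le u) (by linarith)
        _ ≤ Real.cos u := by linarith
  have hs1 : |s| ≤ 1 := by
    have h1 : |s| * Real.cos u = |Real.sin u| * |Real.cos v| := by
      rw [← abs_of_pos hcu, ← abs_mul, hscos, abs_mul, abs_abs]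
    by_contra hc
    push_neg at hc
    have : 1 * Real.cos u < |s| * Real.cos u := by
      exact mul_lt_mul_of_pos_right hc hcu
    rw [h1] at this; linarith
  have hs1a : -1 ≤ s := by cases abs_le.mp hs1; assumption
  have hs1b : s ≤ 1 := by cases abs_le.mp hs1; assumption
  -- compute the product P = sin(h/2) * sin(h̲/2)
  have hH : resH x z / 2 = u + Real.arcsin s := by
    rw [resH, hu, hs, hv]; ring
  have hHu : resHu x z / 2 = -u + Real.arcsin s := by
    rw [resHu, resH, hu, hs, hv]; ring
  set P := Real.sin (resH x z / 2) * Real.sin (resHu x z / 2) with hP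
  have hPval : P = s ^ 2 - Real.sin u ^ 2 := by
    rw [hP, hH, hHu, Real.sin_add, Real.sin_add, Real.sin_arcsin hs1a hs1b,
      Real.cos_arcsin, Real.sin_neg, Real.cos_neg]
    have h1 : Real.sqrt (1 - s ^ 2) ^ 2 = 1 - s ^ 2 :=
      Real.sq_sqrt (by nlinarith)
    linear_combination (-(Real.sin u ^ 2)) * h1 + s ^ 2 * Real.sin_sq_add_cos_sq u
  -- identity: cos²v − cos²u = −sin(z/2)·sin(x/2)
  have hid : Real.cos v ^ 2 - Real.cos u ^ 2 = -(Real.sin (z / 2) * Real.sin (x / 2)) := by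
    have hz2 : z / 2 = v + u := by rw [hu, hv]; ring
    have hx2' : x / 2 = v - u := by rw [hu, hv]; ring
    rw [hz2, hx2', Real.sin_add, Real.sin_sub]
    linear_combination (-(Real.cos v ^ 2)) * Real.sin_sq_add_cos_sq u +
      Real.cos u ^ 2 * Real.sin_sq_add_cos_sq v
  have hPcos : P * Real.cos u ^ 2 = -(Real.sin (x / 2) * Real.sin (z / 2)) * Real.sin u ^ 2 := by
    have h1 : s ^ 2 * Real.cos u ^ 2 = Real.sin u ^ 2 * Real.cos v ^ 2 := by
      calc s ^ 2 * Real.cos u ^ 2 = (s * Real.cos u) ^ 2 := by ring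
        _ = (|Real.sin u| * Real.cos v) ^ 2 := by rw [hscos]
        _ = Real.sin u ^ 2 * Real.cos v ^ 2 := by rw [mul_pow, sq_abs]
    linear_combination Real.cos u ^ 2 * hPval + h1 + Real.sin u ^ 2 * hid
  -- put everything together
  have hωz : ω z = Real.sin (z / 2) := abs_of_nonneg hsz
  have hωx : ω x = Real.sin (x / 2) := abs_of_nonneg hsx
  have hωP : ω (resH x z) * ω (resHu x z) = |P| := by
    rw [ω, ω, hP, abs_mul]
  have hPabs : |P| * Real.cos u ^ 2 = Real.sin (x / 2) * Real.sin (z / 2) * Real.sin u ^ 2 := by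
    have h1 : |P * Real.cos u ^ 2| = |P| * Real.cos u ^ 2 := by
      rw [abs_mul, abs_of_nonneg (sq_nonneg (Real.cos u))]
    rw [← h1, hPcos, abs_mul, abs_neg, abs_of_nonneg (mul_nonneg hsx hsz),
      abs_of_nonneg (sq_nonneg (Real.sin u))]
  rw [hωz, hωx, mul_assoc, hωP]
  have hcu2 : 0 < Real.cos u ^ 2 := by positivity
  have hmain : Real.sin (z / 2) * |P| * Real.cos u ^ 2 ≤
      4 * Real.sin (x / 2) * Real.cos u ^ 2 := by
    have h2 : Real.sin u ^ 2 * Real.sin (z / 2) ^ 2 ≤ 4 * Real.cos u ^ 2 := by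
      have h2' := mul_le_mul hK hK (mul_nonneg (abs_nonneg _) hsz) (by positivity)
      calc Real.sin u ^ 2 * Real.sin (z / 2) ^ 2
          = |Real.sin u| * Real.sin (z / 2) * (|Real.sin u| * Real.sin (z / 2)) := by
            rw [← sq_abs (Real.sin u)]; ring
        _ ≤ 2 * Real.cos u * (2 * Real.cos u) := h2'
        _ = 4 * Real.cos u ^ 2 := by ring
    have h3 : Real.sin (z / 2) * |P| * Real.cos u ^ 2
        = Real.sin (x / 2) * (Real.sin u ^ 2 * Real.sin (z / 2) ^ 2) := by
      linear_combination Real.sin (z / 2) * hPabs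
    rw [h3]
    calc Real.sin (x / 2) * (Real.sin u ^ 2 * Real.sin (z / 2) ^ 2)
        ≤ Real.sin (x / 2) * (4 * Real.cos u ^ 2) := mul_le_mul_of_nonneg_left h2 hsx
      _ = 4 * Real.sin (x / 2) * Real.cos u ^ 2 := by ring
  exact le_of_mul_le_mul_right hmain hcu2
end
end

section
/- Asymptotics of the collision frequency for zero mass (singular Rayleigh–Jeans equilibrium, β = 1, γ = 0): define a₀(x) = ω(x)² · ∫₀^{2π} dz/√F₊(x,z). Then there exist constants c, C > 0 such that c · sin(x/2)^{5/3} ≤ a₀(x) ≤ C · sin(x/2)^{5/3} for all x ∈ [0,2π]. In particular a₀ is nonnegative and vanishes on [0,2π] only at x = 0 and x = 2π. -/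
open MeasureTheory Real Set

noncomputable section

/-- The collision frequency for the singular Rayleigh–Jeans equilibrium (`β = 1`, `γ = 0`):
`a₀(x) = ω(x)² ∫₀^{2π} dz/√F₊(x,z)`. -/
def a₀ (x : ℝ) : ℝ := ω x ^ 2 * ∫ z in (0:ℝ)..(2 * π), 1 / Real.sqrt (Fplus x z)

namespace S7

def Gg (x t : ℝ) : ℝ :=
  (Real.cos (x / 2) - Real.cos (t / 2)) ^ 2 + 4 * Real.sin (x / 2) * Real.sin (t / 2)

lemma Gg_cont (x : ℝ) : Continuous (Gg x) := by
  unfold Gg; fun_prop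

lemma Gg_pos {x t : ℝ} (hx : 0 < x) (hx' : x ≤ π) (ht : 0 ≤ t) (ht' : t ≤ 2 * π) :
    0 < Gg x t := by
  have hsx : 0 < Real.sin (x / 2) := Real.sin_pos_of_pos_of_lt_pi (by linarith)
    (by nlinarith [Real.pi_gt_three])
  have hst : 0 ≤ Real.sin (t / 2) := Real.sin_nonneg_of_nonneg_of_le_pi (by linarith) (by linarith)
  unfold Gg
  rcases lt_or_eq_of_le hst with h | h
  · nlinarith [sq_nonneg (Real.cos (x / 2) - Real.cos (t / 2))]
  · have h2 := Real.sin_sq_add_cos_sq (x / 2)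
    have h3 := Real.sin_sq_add_cos_sq (t / 2)
    rw [← h] at h3
    -- cos(t/2)^2 = 1
    nlinarith [sq_nonneg (Real.cos (x / 2) * Real.cos (t / 2) - 1), sq_nonneg (Real.sin (x/2)),
      sq_nonneg (Real.cos (x / 2) - Real.cos (t / 2)), mul_pos hsx hsx,
      sq_nonneg ((Real.cos (x / 2) - Real.cos (t / 2)) * Real.cos (t/2))]

lemma Gg_le_eight {x t : ℝ} : Gg x t ≤ 8 := by
  unfold Gg
  nlinarith [Real.neg_one_le_cos (x/2), Real.cos_le_one (x/2), Real.neg_one_le_cos (t/2),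
    Real.cos_le_one (t/2), Real.neg_one_le_sin (x/2), Real.sin_le_one (x/2),
    Real.neg_one_le_sin (t/2), Real.sin_le_one (t/2)]

/-- far region: t ∈ [π, 2π] -/
lemma Gg_far {x t : ℝ} (hx : 0 < x) (hx' : x ≤ π) (ht : π ≤ t) (ht' : t ≤ 2 * π) :
    1 / 4 ≤ Gg x t := by
  have hcx : 0 ≤ Real.cos (x / 2) :=
    Real.cos_nonneg_of_mem_Icc ⟨by linarith [Real.pi_pos], by linarith⟩
  have hct : Real.cos (t / 2) ≤ 0 :=
    Real.cos_nonpos_of_pi_div_two_le_of_le (by linarith) (by linarith [Real.pi_pos])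
  have hsx : 0 ≤ Real.sin (x / 2) := Real.sin_nonneg_of_nonneg_of_le_pi (by linarith) (by linarith)
  have hst : 0 ≤ Real.sin (t / 2) := Real.sin_nonneg_of_nonneg_of_le_pi (by linarith) (by linarith)
  unfold Gg
  rcases le_or_gt (1/2 : ℝ) (Real.cos (x/2)) with h1 | h1
  · nlinarith
  rcases le_or_gt (Real.cos (t/2)) (-(1/2) : ℝ) with h2 | h2
  · nlinarith
  · have h3 := Real.sin_sq_add_cos_sq (x / 2)
    have h4 := Real.sin_sq_add_cos_sq (t / 2)
    have h5 : (3:ℝ)/4 ≤ Real.sin (x/2)^2 := by nlinarith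
    have h6 : (3:ℝ)/4 ≤ Real.sin (t/2)^2 := by nlinarith
    nlinarith [sq_nonneg (Real.cos (x / 2) - Real.cos (t / 2)), mul_nonneg hsx hst,
      mul_le_mul h5 h6 (by positivity) (by positivity),
      sq_nonneg (Real.sin (x/2) * Real.sin (t/2))]

end S7

namespace S7
/-- near region lower bound via product of sines -/
lemma Gg_low {x t : ℝ} (hx : 0 ≤ x) (hx' : x ≤ π) (ht : 0 ≤ t) (ht' : t ≤ π) :
    4 * x * t / π ^ 2 ≤ Gg x t := by
  have hπ := Real.pi_pos
  have h1 : x / π ≤ Real.sin (x / 2) := by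
    have h := Real.mul_le_sin (x := x / 2) (by linarith) (by linarith)
    have e : 2 / π * (x / 2) = x / π := by field_simp
    linarith [e ▸ h]
  have h2 : t / π ≤ Real.sin (t / 2) := by
    have h := Real.mul_le_sin (x := t / 2) (by linarith) (by linarith)
    have e : 2 / π * (t / 2) = t / π := by field_simp
    linarith [e ▸ h]
  have h3 : (x / π) * (t / π) ≤ Real.sin (x / 2) * Real.sin (t / 2) :=
    mul_le_mul h1 h2 (by positivity) (le_trans (by positivity) h1)
  have e : 4 * x * t / π ^ 2 = 4 * ((x / π) * (t / π)) := by field_simp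
  unfold Gg
  rw [e]
  nlinarith [sq_nonneg (Real.cos (x / 2) - Real.cos (t / 2))]

set_option maxHeartbeats 2000000 in
/-- quartic lower bound on [2x, π] -/
lemma Gg_quart {x t : ℝ} (hx : 0 < x) (ht2 : 2 * x ≤ t) (ht' : t ≤ π) :
    9 * t ^ 4 / (64 * π ^ 4) ≤ Gg x t := by
  have hπ := Real.pi_pos
  have hx' : x ≤ π := by linarith
  have hcc := Real.cos_sub_cos (x / 2) (t / 2)
  rw [show (x / 2 + t / 2) / 2 = (x + t) / 4 by ring,
      show (x / 2 - t / 2) / 2 = (x - t) / 4 by ring] at hcc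
  set sP := Real.sin ((x + t) / 4) with hsP
  have hsQ : Real.sin ((x - t) / 4) = -Real.sin ((t - x) / 4) := by
    rw [show (x - t) / 4 = -((t - x) / 4) by ring, Real.sin_neg]
  set sQ := Real.sin ((t - x) / 4) with hsQdef
  have hP : (x + t) / (2 * π) ≤ sP := by
    have h := Real.mul_le_sin (x := (x + t) / 4) (by linarith) (by linarith)
    have e : 2 / π * ((x + t) / 4) = (x + t) / (2 * π) := by field_simp; ring
    linarith [e ▸ h]
  have hQ : (t - x) / (2 * π) ≤ sQ := by
    have h := Real.mul_le_sin (x := (t - x) / 4) (by linarith) (by linarith)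
    have e : 2 / π * ((t - x) / 4) = (t - x) / (2 * π) := by field_simp; ring
    linarith [e ▸ h]
  have hPn : (0:ℝ) ≤ (x + t) / (2 * π) := div_nonneg (by linarith) (by linarith)
  have hQn : (0:ℝ) ≤ (t - x) / (2 * π) := div_nonneg (by linarith) (by linarith)
  have h3 : ((x + t) / (2 * π)) * ((t - x) / (2 * π)) ≤ sP * sQ :=
    mul_le_mul hP hQ hQn (le_trans hPn hP)
  have h4 : (((x + t) / (2 * π)) * ((t - x) / (2 * π))) ^ 2 ≤ (sP * sQ) ^ 2 :=
    pow_le_pow_left₀ (by positivity) h3 2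
  have h5 : ((x + t) * (t - x)) ^ 2 ≤ (2 * π) ^ 2 * (2 * π) ^ 2 * (sP * sQ) ^ 2 := by
    have := mul_le_mul_of_nonneg_left h4 (le_of_lt (by positivity :
      (0:ℝ) < (2 * π) ^ 2 * (2 * π) ^ 2))
    calc ((x + t) * (t - x)) ^ 2
        = (2 * π) ^ 2 * (2 * π) ^ 2 * ((((x + t) / (2 * π)) * ((t - x) / (2 * π))) ^ 2) := by
          field_simp
    _ ≤ _ := this
  have hst : 0 ≤ 4 * Real.sin (x / 2) * Real.sin (t / 2) := by
    have := Real.sin_nonneg_of_nonneg_of_le_pi (x := x / 2) (by linarith) (by linarith)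
    have := Real.sin_nonneg_of_nonneg_of_le_pi (x := t / 2) (by linarith) (by linarith)
    positivity
  have hGe : Gg x t = 4 * (sP * sQ) ^ 2 + 4 * Real.sin (x / 2) * Real.sin (t / 2) := by
    unfold Gg
    rw [hcc, hsQ]
    ring
  rw [hGe, div_le_iff₀ (by positivity)]
  have hsq2 : (2 * x) * (2 * x) ≤ t * t := mul_le_mul ht2 ht2 (by linarith) (by linarith)
  have hf1 : (0:ℝ) ≤ t ^ 2 - 4 * x ^ 2 := by nlinarith
  have hf2 : (0:ℝ) ≤ 7 * t ^ 2 - 4 * x ^ 2 := by nlinarith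
  have h6 : 9 * t ^ 4 ≤ 16 * ((x + t) * (t - x)) ^ 2 := by linarith [mul_nonneg hf1 hf2]
  linarith [h6, mul_le_mul_of_nonneg_left h5 (by norm_num : (0:ℝ) ≤ 16),
    mul_nonneg (show (0:ℝ) ≤ 64 * π ^ 4 by positivity) hst]

/-- matching upper bound in the resonance region -/
lemma Gg_near_ub {x t : ℝ} (hx : 0 ≤ x) (hxt : x ≤ t) (ht3 : t ^ 3 ≤ x) :
    Gg x t ≤ 2 * x * t := by
  have ht0 : 0 ≤ t := le_trans hx hxt
  have ht1 : t ≤ 1 := by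
    by_contra hc
    push_neg at hc
    have h1 : 0 < t * ((t - 1) * (t + 1)) :=
      mul_pos (by linarith) (mul_pos (by linarith) (by linarith))
    nlinarith [h1]
  have hπ := Real.pi_gt_three
  have hcc := Real.cos_sub_cos (x / 2) (t / 2)
  rw [show (x / 2 + t / 2) / 2 = (x + t) / 4 by ring,
      show (x / 2 - t / 2) / 2 = (x - t) / 4 by ring] at hcc
  have hP2 : Real.sin ((x + t) / 4) ^ 2 ≤ ((x + t) / 4) ^ 2 := Real.sin_sq_le_sq
  have hQ2 : Real.sin ((x - t) / 4) ^ 2 ≤ ((x - t) / 4) ^ 2 := Real.sin_sq_le_sq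
  have hsx : Real.sin (x / 2) ≤ x / 2 := Real.sin_le (by linarith)
  have hst : Real.sin (t / 2) ≤ t / 2 := Real.sin_le (by linarith)
  have hsxn : 0 ≤ Real.sin (x / 2) :=
    Real.sin_nonneg_of_nonneg_of_le_pi (by linarith) (by linarith)
  have hstn : 0 ≤ Real.sin (t / 2) :=
    Real.sin_nonneg_of_nonneg_of_le_pi (by linarith) (by linarith)
  have hsq : (Real.cos (x / 2) - Real.cos (t / 2)) ^ 2
      = 4 * (Real.sin ((x + t) / 4) ^ 2 * Real.sin ((x - t) / 4) ^ 2) := by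
    rw [hcc]; ring
  have h7 : Real.sin ((x + t) / 4) ^ 2 * Real.sin ((x - t) / 4) ^ 2
      ≤ ((x + t) / 4) ^ 2 * ((x - t) / 4) ^ 2 :=
    mul_le_mul hP2 hQ2 (sq_nonneg _) (by positivity)
  have e1 : ((x + t) / 4) ^ 2 * ((x - t) / 4) ^ 2 = (t ^ 2 - x ^ 2) ^ 2 / 256 := by ring
  have e2 : (t ^ 2 - x ^ 2) ^ 2 ≤ (t ^ 2) ^ 2 := by
    have hx2 : x ^ 2 ≤ t ^ 2 := by nlinarith
    have h0 : 0 ≤ t ^ 2 - x ^ 2 := by linarith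
    nlinarith [sq_nonneg x]
  have e3 : (t ^ 2) ^ 2 ≤ x * t := by
    calc (t ^ 2) ^ 2 = t ^ 3 * t := by ring
    _ ≤ x * t := mul_le_mul_of_nonneg_right ht3 ht0
  have key1 : (Real.cos (x / 2) - Real.cos (t / 2)) ^ 2 ≤ x * t := by
    rw [hsq]
    have hxt0 : 0 ≤ x * t := mul_nonneg hx ht0
    nlinarith [h7]
  have key2 : 4 * Real.sin (x / 2) * Real.sin (t / 2) ≤ x * t := by
    have := mul_le_mul hsx hst hstn (by linarith : (0:ℝ) ≤ x / 2)
    nlinarith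
  unfold Gg
  linarith
end S7

namespace S7

lemma one_div_sqrt_le {a m : ℝ} (hm : 0 < m) (h : m ≤ a) :
    1 / Real.sqrt a ≤ 1 / Real.sqrt m :=
  one_div_le_one_div_of_le (Real.sqrt_pos.mpr hm) (Real.sqrt_le_sqrt h)

lemma le_one_div_sqrt {a M : ℝ} (ha : 0 < a) (h : a ≤ M) :
    1 / Real.sqrt M ≤ 1 / Real.sqrt a :=
  one_div_le_one_div_of_le (Real.sqrt_pos.mpr ha) (Real.sqrt_le_sqrt h)

lemma f_nonneg (x t : ℝ) : 0 ≤ 1 / Real.sqrt (Gg x t) := by positivity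

lemma f_integrable {x : ℝ} (hx : 0 < x) (hx' : x ≤ π) {a b : ℝ}
    (ha : 0 ≤ a) (hab : a ≤ b) (hb : b ≤ 2 * π) :
    IntervalIntegrable (fun t => 1 / Real.sqrt (Gg x t)) volume a b := by
  apply ContinuousOn.intervalIntegrable
  have hsub : Set.uIcc a b ⊆ Set.Icc 0 (2 * π) := by
    rw [Set.uIcc_of_le hab]; exact Icc_subset_Icc ha hb
  refine ContinuousOn.mono ?_ hsub
  refine ContinuousOn.div continuousOn_const ((Gg_cont x).sqrt.continuousOn) ?_
  intro t ht
  exact Real.sqrt_ne_zero'.mpr (Gg_pos hx hx' ht.1 ht.2)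

lemma integral_mono_Ioc {f g : ℝ → ℝ} {a b : ℝ} (hab : a ≤ b)
    (hf : IntervalIntegrable f volume a b) (hg : IntervalIntegrable g volume a b)
    (h : ∀ t ∈ Set.Ioc a b, f t ≤ g t) : (∫ t in a..b, f t) ≤ ∫ t in a..b, g t := by
  rw [intervalIntegral.integral_of_le hab, intervalIntegral.integral_of_le hab]
  exact setIntegral_mono_on hf.1 hg.1 measurableSet_Ioc h

/-- sqrt of the near lower bound -/
lemma sqrt_low {x t : ℝ} (hx : 0 ≤ x) (ht : 0 ≤ t) :
    Real.sqrt (4 * x * t / π ^ 2) = 2 * Real.sqrt x * Real.sqrt t / π := by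
  have hπ := Real.pi_pos
  have e : 4 * x * t / π ^ 2 = (2 * Real.sqrt x * Real.sqrt t / π) ^ 2 := by
    rw [div_pow, mul_pow, mul_pow, Real.sq_sqrt hx, Real.sq_sqrt ht]
    norm_num
  rw [e, Real.sqrt_sq (by positivity)]

lemma sqrt_quart {t : ℝ} : Real.sqrt (9 * t ^ 4 / (64 * π ^ 4)) = 3 * t ^ 2 / (8 * π ^ 2) := by
  have hπ := Real.pi_pos
  have e : 9 * t ^ 4 / (64 * π ^ 4) = (3 * t ^ 2 / (8 * π ^ 2)) ^ 2 := by ring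
  rw [e, Real.sqrt_sq (by positivity)]

lemma rpow_half {t : ℝ} (ht : 0 < t) : t ^ (-(1:ℝ)/2) = 1 / Real.sqrt t := by
  rw [Real.sqrt_eq_rpow, show (-(1:ℝ)/2) = -(1/2 : ℝ) by norm_num,
    Real.rpow_neg ht.le, one_div]
  norm_num

end S7

namespace S7

lemma integral_c_rpow_half (c : ℝ) {a b : ℝ} (ha : 0 ≤ a) (hab : a ≤ b) :
    ∫ t in a..b, c * t ^ (-(1:ℝ)/2) = 2 * c * (Real.sqrt b - Real.sqrt a) := by
  rw [intervalIntegral.integral_const_mul, integral_rpow (Or.inl (by norm_num)),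
    Real.sqrt_eq_rpow, Real.sqrt_eq_rpow]
  norm_num
  ring

lemma intable_c_rpow_half (c : ℝ) (a b : ℝ) :
    IntervalIntegrable (fun t => c * t ^ (-(1:ℝ)/2)) volume a b :=
  (intervalIntegral.intervalIntegrable_rpow' (by norm_num)).const_mul c

/-- upper bound for a piece inside [0, π] -/
lemma piece_near {x a b : ℝ} (hx : 0 < x) (hx' : x ≤ π) (ha : 0 ≤ a) (hab : a ≤ b)
    (hb : b ≤ π) :
    (∫ t in a..b, 1 / Real.sqrt (Gg x t))
      ≤ π / Real.sqrt x * (Real.sqrt b - Real.sqrt a) := by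
  have hπ := Real.pi_pos
  have hsx : 0 < Real.sqrt x := Real.sqrt_pos.mpr hx
  have h2 : (∫ t in a..b, 1 / Real.sqrt (Gg x t))
      ≤ ∫ t in a..b, (π / (2 * Real.sqrt x)) * t ^ (-(1:ℝ)/2) := by
    apply integral_mono_Ioc hab (f_integrable hx hx' ha hab (by linarith))
      (intable_c_rpow_half _ _ _)
    intro t ht
    have ht0 : 0 < t := lt_of_le_of_lt ha ht.1
    have htπ : t ≤ π := ht.2.trans hb
    have hst : 0 < Real.sqrt t := Real.sqrt_pos.mpr ht0
    have h3 : 1 / Real.sqrt (Gg x t) ≤ 1 / Real.sqrt (4 * x * t / π ^ 2) :=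
      one_div_sqrt_le (by positivity) (Gg_low hx.le hx' ht0.le htπ)
    rw [sqrt_low hx.le ht0.le] at h3
    calc 1 / Real.sqrt (Gg x t) ≤ 1 / (2 * Real.sqrt x * Real.sqrt t / π) := h3
    _ = (π / (2 * Real.sqrt x)) * t ^ (-(1:ℝ)/2) := by
        rw [rpow_half ht0]; field_simp
  calc (∫ t in a..b, 1 / Real.sqrt (Gg x t))
      ≤ ∫ t in a..b, (π / (2 * Real.sqrt x)) * t ^ (-(1:ℝ)/2) := h2
  _ = 2 * (π / (2 * Real.sqrt x)) * (Real.sqrt b - Real.sqrt a) :=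
      integral_c_rpow_half _ ha hab
  _ = π / Real.sqrt x * (Real.sqrt b - Real.sqrt a) := by field_simp

/-- upper bound for the quartic piece [r, π] -/
lemma piece_quart {x r : ℝ} (hx : 0 < x) (hx' : x ≤ π) (hr : 0 < r) (h2x : 2 * x ≤ r)
    (hrπ : r ≤ π) :
    (∫ t in r..π, 1 / Real.sqrt (Gg x t)) ≤ 8 * π ^ 2 / 3 * (1 / r - 1 / π) := by
  have hπ := Real.pi_pos
  have h2 : (∫ t in r..π, 1 / Real.sqrt (Gg x t))
      ≤ ∫ t in r..π, (8 * π ^ 2 / 3) * t ^ (-(2:ℝ)) := by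
    apply integral_mono_Ioc hrπ (f_integrable hx hx' hr.le hrπ (by linarith))
    · apply ContinuousOn.intervalIntegrable
      apply ContinuousOn.mono (s := {t : ℝ | t ≠ 0})
      · exact ContinuousOn.const_smul (α := ℝ) (M := ℝ) (ContinuousOn.rpow_const continuousOn_id
          (fun t ht => Or.inl ht)) _
      · intro t ht
        rw [Set.uIcc_of_le hrπ] at ht
        exact ne_of_gt (lt_of_lt_of_le hr ht.1)
    · intro t ht
      have ht0 : 0 < t := lt_trans hr ht.1
      have h3 : 1 / Real.sqrt (Gg x t) ≤ 1 / Real.sqrt (9 * t ^ 4 / (64 * π ^ 4)) :=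
        one_div_sqrt_le (by positivity) (Gg_quart hx (le_trans h2x ht.1.le) (ht.2))
      rw [sqrt_quart] at h3
      calc 1 / Real.sqrt (Gg x t) ≤ 1 / (3 * t ^ 2 / (8 * π ^ 2)) := h3
      _ = (8 * π ^ 2 / 3) * t ^ (-(2:ℝ)) := by
          rw [show t ^ (-(2:ℝ)) = (t ^ (2:ℕ) : ℝ)⁻¹ by
            rw [← Real.rpow_natCast t 2, ← Real.rpow_neg ht0.le]; norm_num]
          field_simp
  calc (∫ t in r..π, 1 / Real.sqrt (Gg x t))
      ≤ ∫ t in r..π, (8 * π ^ 2 / 3) * t ^ (-(2:ℝ)) := h2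
  _ = 8 * π ^ 2 / 3 * (1 / r - 1 / π) := by
      rw [intervalIntegral.integral_const_mul, integral_rpow (Or.inr ⟨by norm_num, by
        rw [Set.uIcc_of_le hrπ]; intro hmem; exact absurd hmem.1 (by linarith)⟩)]
      rw [show (-(2:ℝ) + 1) = -1 by norm_num]
      rw [Real.rpow_neg_one, Real.rpow_neg_one]
      field_simp
      ring

/-- upper bound for the far piece [π, 2π] -/
lemma piece_far {x : ℝ} (hx : 0 < x) (hx' : x ≤ π) :
    (∫ t in π..(2*π), 1 / Real.sqrt (Gg x t)) ≤ 2 * π := by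
  have hπ := Real.pi_pos
  have h2 : (∫ t in π..(2*π), 1 / Real.sqrt (Gg x t)) ≤ ∫ _t in π..(2*π), (2:ℝ) := by
    apply integral_mono_Ioc (by linarith) (f_integrable hx hx' hπ.le (by linarith) le_rfl)
      intervalIntegrable_const
    intro t ht
    have h3 : 1 / Real.sqrt (Gg x t) ≤ 1 / Real.sqrt (1/4) :=
      one_div_sqrt_le (by norm_num) (Gg_far hx hx' ht.1.le ht.2)
    rw [show (1/4:ℝ) = (1/2)^2 by norm_num, Real.sqrt_sq (by norm_num)] at h3
    calc 1 / Real.sqrt (Gg x t) ≤ 1 / (1/2 : ℝ) := h3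
    _ = 2 := by norm_num
  calc (∫ t in π..(2*π), 1 / Real.sqrt (Gg x t)) ≤ ∫ _t in π..(2*π), (2:ℝ) := h2
  _ = 2 * π := by rw [intervalIntegral.integral_const]; simp; ring
end S7

namespace S7

lemma r_cube {x : ℝ} (hx : 0 < x) : (x ^ ((1:ℝ)/3)) ^ (3:ℕ) = x := by
  rw [← Real.rpow_natCast (x ^ ((1:ℝ)/3)) 3, ← Real.rpow_mul hx.le]
  norm_num

lemma x_neg_third {x : ℝ} (hx : 0 < x) : x ^ (-(1:ℝ)/3) = 1 / (x ^ ((1:ℝ)/3)) := by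
  rw [show (-(1:ℝ)/3) = -((1:ℝ)/3) by norm_num, Real.rpow_neg hx.le]
  exact (one_div _).symm

lemma sqrt_x_eq {x : ℝ} (hx : 0 < x) :
    Real.sqrt x = x ^ ((1:ℝ)/3) * Real.sqrt (x ^ ((1:ℝ)/3)) := by
  set r := x ^ ((1:ℝ)/3) with hr
  have hr0 : 0 < r := Real.rpow_pos_of_pos hx _
  have h3 : r ^ (3:ℕ) = x := r_cube hx
  rw [← h3, show r ^ (3:ℕ) = r ^ 2 * r by ring, Real.sqrt_mul (sq_nonneg r),
    Real.sqrt_sq hr0.le]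

set_option maxHeartbeats 2000000 in
lemma core_upper {x : ℝ} (hx : 0 < x) (hx' : x ≤ π) :
    (∫ t in (0:ℝ)..(2*π), 1 / Real.sqrt (Gg x t)) ≤ 70 * x ^ (-(1:ℝ)/3) := by
  have hπ := Real.pi_pos
  have hπ3 := Real.pi_gt_three
  have hπ4 := Real.pi_le_four
  set r := x ^ ((1:ℝ)/3) with hrdef
  have hr0 : 0 < r := Real.rpow_pos_of_pos hx _
  have hr3 : r ^ (3:ℕ) = x := r_cube hx
  have hsx : 0 < Real.sqrt x := Real.sqrt_pos.mpr hx
  have hsr : 0 < Real.sqrt r := Real.sqrt_pos.mpr hr0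
  have hxw : Real.sqrt x = r * Real.sqrt r := sqrt_x_eq hx
  rw [x_neg_third hx, ← hrdef]
  rcases le_or_gt x (1/8 : ℝ) with hc | hc
  · -- small x
    have hr12 : r ≤ 1/2 := by
      have h1 : r ^ (3:ℕ) ≤ (1/2:ℝ) ^ (3:ℕ) := by rw [hr3]; norm_num; linarith
      exact le_of_pow_le_pow_left₀ (by norm_num) (by norm_num) h1
    have h2xr : 2 * x ≤ r := by
      have h1 : (2*x) ^ (3:ℕ) ≤ r ^ (3:ℕ) := by
        rw [hr3]
        nlinarith [mul_le_mul hc hc hx.le (by norm_num : (0:ℝ) ≤ 1/8), mul_pos hx hx]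
      exact le_of_pow_le_pow_left₀ (by norm_num) hr0.le h1
    have hrπ : r ≤ π := by linarith
    have hir : 2 ≤ 1 / r := by
      rw [le_div_iff₀ hr0]; linarith
    -- split the integral
    have i1 := f_integrable hx hx' le_rfl (by linarith : (0:ℝ) ≤ 2*x) (by linarith)
    have i2 := f_integrable hx hx' (by linarith : (0:ℝ) ≤ 2*x) h2xr (by linarith)
    have i3 := f_integrable hx hx' hr0.le hrπ (by linarith)
    have i4 := f_integrable hx hx' hπ.le (by linarith : π ≤ 2*π) le_rfl
    have e1 := intervalIntegral.integral_add_adjacent_intervals i1 i2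
    have e2 := intervalIntegral.integral_add_adjacent_intervals (i1.trans i2) i3
    have e3 := intervalIntegral.integral_add_adjacent_intervals ((i1.trans i2).trans i3) i4
    -- piece bounds
    have b1 : (∫ t in (0:ℝ)..(2*x), 1 / Real.sqrt (Gg x t)) ≤ 3 * (1/r) := by
      have h := piece_near hx hx' le_rfl (by linarith : (0:ℝ) ≤ 2*x) (by linarith)
      rw [Real.sqrt_zero, sub_zero] at h
      have e : Real.sqrt (2*x) = Real.sqrt 2 * Real.sqrt x := Real.sqrt_mul (by norm_num) x
      have h2 : π / Real.sqrt x * Real.sqrt (2*x) = π * Real.sqrt 2 := by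
        rw [e]; field_simp
      have hs2 : Real.sqrt 2 ≤ 3/2 := by
        rw [show (3/2:ℝ) = Real.sqrt ((3/2)^2) by rw [Real.sqrt_sq]; norm_num]
        exact Real.sqrt_le_sqrt (by norm_num)
      calc (∫ t in (0:ℝ)..(2*x), 1 / Real.sqrt (Gg x t)) ≤ π * Real.sqrt 2 := by
            rw [← h2]; exact h
      _ ≤ 6 := by nlinarith [Real.sqrt_nonneg 2]
      _ ≤ 3 * (1/r) := by linarith
    have b2 : (∫ t in (2*x)..r, 1 / Real.sqrt (Gg x t)) ≤ 4 * (1/r) := by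
      have h := piece_near hx hx' (by linarith : (0:ℝ) ≤ 2*x) h2xr hrπ
      have h2 : π / Real.sqrt x * (Real.sqrt r - Real.sqrt (2*x)) ≤ π / Real.sqrt x * Real.sqrt r := by
        have := Real.sqrt_nonneg (2*x)
        have : 0 ≤ π / Real.sqrt x := by positivity
        nlinarith [Real.sqrt_nonneg (2*x)]
      have h3 : π / Real.sqrt x * Real.sqrt r = π * (1/r) := by
        rw [hxw]; field_simp
      calc (∫ t in (2*x)..r, 1 / Real.sqrt (Gg x t)) ≤ π / Real.sqrt x * Real.sqrt r :=
            le_trans h h2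
      _ = π * (1/r) := h3
      _ ≤ 4 * (1/r) := by nlinarith [hir]
    have b3 : (∫ t in r..π, 1 / Real.sqrt (Gg x t)) ≤ 43 * (1/r) := by
      have h := piece_quart hx hx' hr0 h2xr hrπ
      have h2 : 8 * π ^ 2 / 3 * (1/r - 1/π) ≤ 43 * (1/r) := by
        have hp : 0 < 1/π := by positivity
        have hq : 8 * π ^ 2 / 3 ≤ 43 := by nlinarith
        have hr' : 0 ≤ 1/r - 1/π ∨ True := Or.inr trivial
        have h5 : 8 * π ^ 2 / 3 * (1/r - 1/π) ≤ 8 * π ^ 2 / 3 * (1/r) := by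
          have : 0 ≤ 8 * π ^ 2 / 3 := by positivity
          nlinarith
        have h6 : 8 * π ^ 2 / 3 * (1/r) ≤ 43 * (1/r) := by
          have : 0 ≤ 1/r := by positivity
          nlinarith
        linarith
      linarith
    have b4 : (∫ t in π..(2*π), 1 / Real.sqrt (Gg x t)) ≤ 4 * (1/r) := by
      have h := piece_far hx hx'
      calc (∫ t in π..(2*π), 1 / Real.sqrt (Gg x t)) ≤ 2*π := h
      _ ≤ 8 := by linarith
      _ ≤ 4 * (1/r) := by linarith
    linarith
  · -- large x
    have hr2 : r ≤ 2 := by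
      have h1 : r ^ (3:ℕ) ≤ (2:ℝ) ^ (3:ℕ) := by rw [hr3]; norm_num; linarith
      exact le_of_pow_le_pow_left₀ (by norm_num) (by norm_num) h1
    have hir : (1/2 : ℝ) ≤ 1 / r := by
      rw [le_div_iff₀ hr0]; linarith
    have i1 := f_integrable hx hx' le_rfl hπ.le (by linarith)
    have i4 := f_integrable hx hx' hπ.le (by linarith : π ≤ 2*π) le_rfl
    have e3 := intervalIntegral.integral_add_adjacent_intervals i1 i4
    have b1 : (∫ t in (0:ℝ)..π, 1 / Real.sqrt (Gg x t)) ≤ 24 := by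
      have h := piece_near hx hx' le_rfl hπ.le le_rfl
      rw [Real.sqrt_zero, sub_zero] at h
      have hsqx : (1/3:ℝ) ≤ Real.sqrt x := by
        rw [show (1/3:ℝ) = Real.sqrt ((1/3)^2) by rw [Real.sqrt_sq]; norm_num]
        exact Real.sqrt_le_sqrt (by norm_num; linarith)
      have hsqπ : Real.sqrt π ≤ 2 := by
        rw [show (2:ℝ) = Real.sqrt (2^2) by rw [Real.sqrt_sq]; norm_num]
        exact Real.sqrt_le_sqrt (by norm_num; linarith)
      have h2 : π / Real.sqrt x ≤ 12 := by
        rw [div_le_iff₀ hsx]; nlinarith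
      calc (∫ t in (0:ℝ)..π, 1 / Real.sqrt (Gg x t)) ≤ π / Real.sqrt x * Real.sqrt π := h
      _ ≤ 12 * 2 := by
          apply mul_le_mul h2 hsqπ (Real.sqrt_nonneg π) (by norm_num)
      _ = 24 := by norm_num
    have b4 := piece_far hx hx'
    have : (∫ t in (0:ℝ)..(2*π), 1 / Real.sqrt (Gg x t)) ≤ 32 := by
      rw [← e3]; linarith
    linarith

end S7

namespace S7

/-- lower bound on the resonance window [x, r] -/
lemma piece_low {x r : ℝ} (hx : 0 < x) (hxr : x ≤ r) (hr3 : r ^ (3:ℕ) ≤ x) (hrπ : r ≤ π) :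
    2 / Real.sqrt (2*x) * (Real.sqrt r - Real.sqrt x)
      ≤ ∫ t in x..r, 1 / Real.sqrt (Gg x t) := by
  have hπ := Real.pi_pos
  have hx' : x ≤ π := hxr.trans hrπ
  have hs2x : 0 < Real.sqrt (2*x) := Real.sqrt_pos.mpr (by linarith)
  have h2 : (∫ t in x..r, (1 / Real.sqrt (2*x)) * t ^ (-(1:ℝ)/2))
      ≤ ∫ t in x..r, 1 / Real.sqrt (Gg x t) := by
    apply intervalIntegral.integral_mono_on hxr (intable_c_rpow_half _ _ _)
      (f_integrable hx hx' hx.le hxr (by linarith))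
    intro t ht
    have ht0 : 0 < t := lt_of_lt_of_le hx ht.1 |>.trans_le le_rfl
    have ht3 : t ^ (3:ℕ) ≤ x := le_trans (pow_le_pow_left₀ (by linarith) ht.2 3) hr3
    have hub : Gg x t ≤ 2 * x * t := Gg_near_ub hx.le ht.1 (by exact_mod_cast ht3)
    have hpos : 0 < Gg x t := Gg_pos hx hx' (by linarith [ht.1]) (by linarith [ht.2])
    have h3 : 1 / Real.sqrt (2 * x * t) ≤ 1 / Real.sqrt (Gg x t) :=
      le_one_div_sqrt hpos hub
    have e : Real.sqrt (2 * x * t) = Real.sqrt (2*x) * Real.sqrt t := Real.sqrt_mul (by linarith) t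
    calc (1 / Real.sqrt (2*x)) * t ^ (-(1:ℝ)/2)
        = 1 / Real.sqrt (2 * x * t) := by
          rw [rpow_half ht0, e]
          field_simp
    _ ≤ 1 / Real.sqrt (Gg x t) := h3
  calc 2 / Real.sqrt (2*x) * (Real.sqrt r - Real.sqrt x)
      = ∫ t in x..r, (1 / Real.sqrt (2*x)) * t ^ (-(1:ℝ)/2) := by
        rw [integral_c_rpow_half _ hx.le hxr]; ring
  _ ≤ _ := h2

set_option maxHeartbeats 1000000 in
lemma core_lower {x : ℝ} (hx : 0 < x) (hx' : x ≤ π) :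
    (1/2) * x ^ (-(1:ℝ)/3) ≤ ∫ t in (0:ℝ)..(2*π), 1 / Real.sqrt (Gg x t) := by
  have hπ := Real.pi_pos
  have hπ3 := Real.pi_gt_three
  have hπ4 := Real.pi_le_four
  set r := x ^ ((1:ℝ)/3) with hrdef
  have hr0 : 0 < r := Real.rpow_pos_of_pos hx _
  have hr3 : r ^ (3:ℕ) = x := r_cube hx
  have hsx : 0 < Real.sqrt x := Real.sqrt_pos.mpr hx
  have hsr : 0 < Real.sqrt r := Real.sqrt_pos.mpr hr0
  have hxw : Real.sqrt x = r * Real.sqrt r := sqrt_x_eq hx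
  rw [x_neg_third hx, ← hrdef]
  rcases le_or_gt x (1/8 : ℝ) with hc | hc
  · -- small x : use the window [x, r]
    have hr12 : r ≤ 1/2 := by
      have h1 : r ^ (3:ℕ) ≤ (1/2:ℝ) ^ (3:ℕ) := by rw [hr3]; norm_num; linarith
      exact le_of_pow_le_pow_left₀ (by norm_num) (by norm_num) h1
    have hxr : x ≤ r := by
      have h1 : x ^ (3:ℕ) ≤ r ^ (3:ℕ) := by
        rw [hr3]
        nlinarith [mul_le_mul hc hc hx.le (by norm_num : (0:ℝ) ≤ 1/8), mul_pos hx hx]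
      exact le_of_pow_le_pow_left₀ (by norm_num) hr0.le h1
    have hrπ : r ≤ π := by linarith
    have i1 := f_integrable hx hx' le_rfl hx.le (by linarith)
    have i2 := f_integrable hx hx' hx.le hxr (by linarith)
    have i3 := f_integrable hx hx' hr0.le (by linarith : r ≤ 2*π) le_rfl
    have e1 := intervalIntegral.integral_add_adjacent_intervals i1 i2
    have e2 := intervalIntegral.integral_add_adjacent_intervals (i1.trans i2) i3
    have n1 : 0 ≤ ∫ t in (0:ℝ)..x, 1 / Real.sqrt (Gg x t) :=
      intervalIntegral.integral_nonneg hx.le (fun u _ => f_nonneg x u)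
    have n3 : 0 ≤ ∫ t in r..(2*π), 1 / Real.sqrt (Gg x t) :=
      intervalIntegral.integral_nonneg (by linarith) (fun u _ => f_nonneg x u)
    have key := piece_low hx hxr hr3.le hrπ
    have hs2 : Real.sqrt 2 ≤ 3/2 := by
      rw [show (3/2:ℝ) = Real.sqrt ((3/2)^2) by rw [Real.sqrt_sq]; norm_num]
      exact Real.sqrt_le_sqrt (by norm_num)
    have key2 : (1/2 : ℝ)*(1/r) ≤ 2 / Real.sqrt (2*x) * (Real.sqrt r - Real.sqrt x) := by
      rw [Real.sqrt_mul (by norm_num : (0:ℝ) ≤ 2) x, hxw]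
      have hD : (0:ℝ) < Real.sqrt 2 * (r * Real.sqrt r) := by positivity
      rw [show (2:ℝ) / (Real.sqrt 2 * (r * Real.sqrt r)) * (Real.sqrt r - r * Real.sqrt r)
            = 2 * (Real.sqrt r - r * Real.sqrt r) / (Real.sqrt 2 * (r * Real.sqrt r)) by ring,
        le_div_iff₀ hD]
      have e5 : (1/2 : ℝ)*(1/r) * (Real.sqrt 2*(r*Real.sqrt r))
          = Real.sqrt 2 * Real.sqrt r / 2 := by field_simp
      rw [e5]
      have hC : (0:ℝ) ≤ 2 - 2*r - Real.sqrt 2 / 2 := by linarith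
      nlinarith [mul_nonneg hsr.le hC]
    linarith [le_trans key2 key]
  · -- large x : constant lower bound
    have hr12 : 1/2 ≤ r := by
      have h1 : (1/2:ℝ) ^ (3:ℕ) ≤ r ^ (3:ℕ) := by rw [hr3]; norm_num; linarith
      exact le_of_pow_le_pow_left₀ (by norm_num) hr0.le h1
    have hIr : 1/r ≤ 2 := by
      rw [div_le_iff₀ hr0]; linarith
    have hconst : (∫ t in (0:ℝ)..(2*π), (1/3 : ℝ))
        ≤ ∫ t in (0:ℝ)..(2*π), 1 / Real.sqrt (Gg x t) := by
      apply intervalIntegral.integral_mono_on (by linarith) intervalIntegrable_const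
        (f_integrable hx hx' le_rfl (by linarith) le_rfl)
      intro t ht
      have hpos : 0 < Gg x t := Gg_pos hx hx' ht.1 ht.2
      have h3 : 1 / Real.sqrt 8 ≤ 1 / Real.sqrt (Gg x t) := le_one_div_sqrt hpos Gg_le_eight
      have h4 : Real.sqrt 8 ≤ 3 := by
        rw [show (3:ℝ) = Real.sqrt (3^2) by rw [Real.sqrt_sq]; norm_num]
        exact Real.sqrt_le_sqrt (by norm_num)
      have h5 : (0:ℝ) < Real.sqrt 8 := Real.sqrt_pos.mpr (by norm_num)
      have h6 : (1/3 : ℝ) ≤ 1 / Real.sqrt 8 := by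
        rw [div_le_div_iff₀ (by norm_num) h5]; linarith
      linarith
    have e7 : (∫ t in (0:ℝ)..(2*π), (1/3 : ℝ)) = 2*π/3 := by
      rw [intervalIntegral.integral_const]; simp; ring
    have h8 : (1/2 : ℝ) * (1/r) ≤ 1 := by linarith
    have h9 : (2:ℝ) ≤ 2*π/3 := by linarith
    linarith [hconst, e7 ▸ hconst]

end S7

namespace S7

lemma Fplus_reflect (x t : ℝ) : Fplus x (2*π - t) = Gg x t := by
  unfold Fplus Gg
  rw [show (2*π - t)/2 = π - t/2 by ring, Real.cos_pi_sub, Real.sin_pi_sub]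
  ring

lemma Fplus_reflect_x (y z : ℝ) : Fplus (2*π - y) z = Gg y z := by
  unfold Fplus Gg
  rw [show (2*π - y)/2 = π - y/2 by ring, Real.cos_pi_sub, Real.sin_pi_sub]
  ring

lemma int_reflect (x : ℝ) :
    (∫ z in (0:ℝ)..(2*π), 1 / Real.sqrt (Fplus x z))
      = ∫ t in (0:ℝ)..(2*π), 1 / Real.sqrt (Gg x t) := by
  have h := intervalIntegral.integral_comp_sub_left (a := (0:ℝ)) (b := 2*π)
    (fun z => 1 / Real.sqrt (Fplus x z)) (2*π)
  simp only [sub_self, sub_zero] at h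
  rw [← h]
  apply intervalIntegral.integral_congr
  intro t _
  simp only [Fplus_reflect]

lemma int_left (y : ℝ) :
    (∫ z in (0:ℝ)..(2*π), 1 / Real.sqrt (Fplus (2*π - y) z))
      = ∫ z in (0:ℝ)..(2*π), 1 / Real.sqrt (Gg y z) := by
  apply intervalIntegral.integral_congr
  intro z _
  simp only [Fplus_reflect_x]

lemma conv_bounds {y : ℝ} (hy : 0 < y) (hy' : y ≤ π) :
    (1/4 : ℝ) * Real.sin (y/2) ^ (-(1:ℝ)/3) ≤ (∫ t in (0:ℝ)..(2*π), 1 / Real.sqrt (Gg y t)) ∧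
    (∫ t in (0:ℝ)..(2*π), 1 / Real.sqrt (Gg y t)) ≤ 70 * Real.sin (y/2) ^ (-(1:ℝ)/3) := by
  have hπ := Real.pi_pos
  have hπ4 := Real.pi_le_four
  set s := Real.sin (y/2) with hsdef
  have hs0 : 0 < s := Real.sin_pos_of_pos_of_lt_pi (by linarith) (by linarith)
  have hsy : s ≤ y := le_trans (Real.sin_le (by linarith)) (by linarith)
  have hys : y ≤ 8 * s := by
    have h1 : y / π ≤ s := by
      have h := Real.mul_le_sin (x := y / 2) (by linarith) (by linarith)
      have e : 2 / π * (y / 2) = y / π := by field_simp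
      linarith [e ▸ h]
    have h2 : y ≤ s * π := (div_le_iff₀ hπ).mp h1
    nlinarith
  have h13 : (0:ℝ) ≤ 1/3 := by norm_num
  have hxu : y ^ (-(1:ℝ)/3) ≤ s ^ (-(1:ℝ)/3) := by
    rw [x_neg_third hy, x_neg_third hs0]
    exact one_div_le_one_div_of_le (Real.rpow_pos_of_pos hs0 _)
      (Real.rpow_le_rpow hs0.le hsy h13)
  have hxl : (1/2:ℝ) * s ^ (-(1:ℝ)/3) ≤ y ^ (-(1:ℝ)/3) := by
    rw [x_neg_third hy, x_neg_third hs0]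
    have h8 : (8*s) ^ ((1:ℝ)/3) = 2 * s ^ ((1:ℝ)/3) := by
      rw [Real.mul_rpow (by norm_num) hs0.le, show (8:ℝ) = 2^(3:ℕ) by norm_num,
        ← Real.rpow_natCast (2:ℝ) 3, ← Real.rpow_mul (by norm_num)]
      norm_num
    have h2 : y ^ ((1:ℝ)/3) ≤ 2 * s ^ ((1:ℝ)/3) := by
      rw [← h8]; exact Real.rpow_le_rpow hy.le hys h13
    have hp1 : 0 < y ^ ((1:ℝ)/3) := Real.rpow_pos_of_pos hy _
    have h3 : 1 / (2 * s ^ ((1:ℝ)/3)) ≤ 1 / (y ^ ((1:ℝ)/3)) :=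
      one_div_le_one_div_of_le hp1 h2
    have e : (1/2:ℝ) * (1 / s ^ ((1:ℝ)/3)) = 1 / (2 * s ^ ((1:ℝ)/3)) := by ring
    linarith [e ▸ h3]
  constructor
  · have h4 : (1/4:ℝ) * s ^ (-(1:ℝ)/3) ≤ (1/2) * y ^ (-(1:ℝ)/3) := by linarith
    exact h4.trans (core_lower hy hy')
  · have h5 : (70:ℝ) * y ^ (-(1:ℝ)/3) ≤ 70 * s ^ (-(1:ℝ)/3) := by linarith
    exact (core_upper hy hy').trans h5

lemma a0_interior {x : ℝ} (hx : 0 < x) (hx2 : x < 2*π) :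
    (1/4:ℝ) * Real.sin (x/2) ^ ((5:ℝ)/3) ≤ a₀ x ∧
      a₀ x ≤ 70 * Real.sin (x/2) ^ ((5:ℝ)/3) := by
  have hπ := Real.pi_pos
  obtain ⟨y, hy, hy', hyx, hsin⟩ : ∃ y, 0 < y ∧ y ≤ π ∧
      (∫ z in (0:ℝ)..(2*π), 1 / Real.sqrt (Fplus x z))
        = (∫ t in (0:ℝ)..(2*π), 1 / Real.sqrt (Gg y t)) ∧
      Real.sin (x/2) = Real.sin (y/2) := by
    rcases le_or_gt x π with h | h
    · exact ⟨x, hx, h, int_reflect x, rfl⟩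
    · refine ⟨2*π - x, by linarith, by linarith, ?_, ?_⟩
      · have h1 := int_left (2*π - x)
        rw [show 2*π - (2*π - x) = x by ring] at h1
        exact h1
      · rw [show x/2 = π - (2*π - x)/2 by ring, Real.sin_pi_sub]
  have hω : ω x ^ 2 = Real.sin (x/2) ^ 2 := sq_abs _
  unfold a₀
  rw [hω, hyx, hsin]
  obtain ⟨hl, hu⟩ := conv_bounds hy hy'
  set s := Real.sin (y/2) with hsdef
  have hs0 : 0 < s := Real.sin_pos_of_pos_of_lt_pi (by linarith) (by linarith)
  have h53 : s ^ ((5:ℝ)/3) = s ^ (2:ℕ) * s ^ (-(1:ℝ)/3) := by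
    rw [← Real.rpow_natCast s 2, ← Real.rpow_add hs0]
    norm_num
  constructor
  · have e : (1/4:ℝ) * s ^ ((5:ℝ)/3) = s ^ (2:ℕ) * ((1/4) * s ^ (-(1:ℝ)/3)) := by
      rw [h53]; ring
    rw [e]
    exact mul_le_mul_of_nonneg_left hl (sq_nonneg s)
  · have e : (70:ℝ) * s ^ ((5:ℝ)/3) = s ^ (2:ℕ) * (70 * s ^ (-(1:ℝ)/3)) := by
      rw [h53]; ring
    rw [e]
    exact mul_le_mul_of_nonneg_left hu (sq_nonneg s)

end S7

namespace S7

lemma a0_endpoint_zero : a₀ 0 = 0 := by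
  unfold a₀ ω
  norm_num

lemma a0_endpoint_two_pi : a₀ (2*π) = 0 := by
  unfold a₀ ω
  rw [show (2*π)/2 = π by ring, Real.sin_pi]
  norm_num

theorem stmt7' :
    ∃ c C : ℝ, 0 < c ∧ 0 < C ∧ ∀ x ∈ Set.Icc (0:ℝ) (2 * π),
      (c * Real.sin (x / 2) ^ ((5:ℝ)/3) ≤ a₀ x ∧
        a₀ x ≤ C * Real.sin (x / 2) ^ ((5:ℝ)/3)) ∧
      (0 ≤ a₀ x ∧ (a₀ x = 0 ↔ x = 0 ∨ x = 2 * π)) := by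
  have hπ := Real.pi_pos
  refine ⟨1/4, 70, by norm_num, by norm_num, ?_⟩
  intro x hx
  rcases eq_or_lt_of_le hx.1 with h0 | h0
  · -- x = 0
    rw [← h0]
    rw [a0_endpoint_zero]
    norm_num [Real.zero_rpow (show ((5:ℝ)/3) ≠ 0 by norm_num)]
  rcases eq_or_lt_of_le hx.2 with h2 | h2
  · -- x = 2π
    rw [h2]
    rw [a0_endpoint_two_pi, show (2*π)/2 = π by ring, Real.sin_pi]
    norm_num [Real.zero_rpow (show ((5:ℝ)/3) ≠ 0 by norm_num)]
  · obtain ⟨hl, hu⟩ := a0_interior h0 h2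
    have hs0 : 0 < Real.sin (x/2) :=
      Real.sin_pos_of_pos_of_lt_pi (by linarith) (by linarith)
    have hp : (0:ℝ) < (1/4) * Real.sin (x/2) ^ ((5:ℝ)/3) := by
      have := Real.rpow_pos_of_pos hs0 ((5:ℝ)/3)
      linarith
    refine ⟨⟨hl, hu⟩, le_trans hp.le hl, ?_⟩
    constructor
    · intro h
      exfalso
      rw [h] at hl
      linarith
    · rintro (h | h)
      · exact absurd h (by linarith)
      · exact absurd h (by linarith)

end S7

/-- **Asymptotics of the collision frequency for zero mass:**
`a₀(x) ∼ sin(x/2)^{5/3}` on `[0,2π]`; in particular `a₀` is nonnegative there and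
vanishes only at `x = 0` and `x = 2π`. -/
theorem stmt7 :
    ∃ c C : ℝ, 0 < c ∧ 0 < C ∧ ∀ x ∈ Set.Icc (0:ℝ) (2 * π),
      (c * Real.sin (x / 2) ^ ((5:ℝ)/3) ≤ a₀ x ∧
        a₀ x ≤ C * Real.sin (x / 2) ^ ((5:ℝ)/3)) ∧
      (0 ≤ a₀ x ∧ (a₀ x = 0 ↔ x = 0 ∨ x = 2 * π)) :=
  S7.stmt7'
end
end
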